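/- arXiv:1801.04414 — 2 statements merged into one kernel-verified Lean document; each statement's English description precedes it below -/
import Mathlib

section
/- Let X_1, ..., X_n be (possibly dependent) standard Cauchy random variables, and let γ_1, ..., γ_n > 0 with γ = Σ γ_i. Then for any t ≥ 1 and n ≥ 3, Pr[Σ_{i=1}^n γ_i |X_i| > γ t] ≤ 2 log(n t) / t. -/
/-!
Put `M = n t`. The event that some `|X i|` exceeds `M` has probability at most
`n · 2/(π M) = 2/(π t)` by the union bound. Off that event `∑ γ i |X i| = ∑ γ i min |X i| M`,
and Markov's inequality bounds the probability that this exceeds `γ t` by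
`E[min |X| M] / t ≤ (2 + log (1 + M²)) / (π t)`. Only the marginal laws enter, so no
independence is needed, and for `M ≥ 3` the two terms add up to at most `2 log M / t`.
-/

open MeasureTheory ProbabilityTheory Finset

/-- The standard Cauchy distribution on ℝ, with density `1/(π(1+x²))`. -/
noncomputable def stdCauchy : Measure ℝ :=
  MeasureTheory.volume.withDensity fun x => ENNReal.ofReal (1 / (Real.pi * (1 + x ^ 2)))

open Real Set
open scoped ENNReal

section Truncation

variable {Ω ι : Type*} {mΩ : MeasurableSpace Ω} {μ : Measure Ω} [Fintype ι]

lemma setOf_lt_sum_mul_abs_subset (w : ι → ℝ) (Y : ι → Ω → ℝ) (c M : ℝ) :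
    {ω | c < ∑ i, w i * |Y i ω|} ⊆
      (⋃ i, {ω | M < |Y i ω|}) ∪ {ω | c < ∑ i, w i * min |Y i ω| M} := by
  intro ω hω
  by_cases hbig : ∃ i, M < |Y i ω|
  · exact Or.inl (mem_iUnion.2 hbig)
  · simp only [not_exists, not_lt] at hbig
    right
    simpa only [mem_ofPred_eq, min_eq_left (hbig _)] using hω

lemma measure_lt_sum_mul_le {w : ι → ℝ} (hw : ∀ i, 0 ≤ w i) {Z : ι → Ω → ℝ}
    (hZ : ∀ i ω, 0 ≤ Z i ω) (hZm : ∀ i, AEMeasurable (Z i) μ) {c : ℝ} (hc : 0 < c) :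
    μ {ω | c < ∑ i, w i * Z i ω} ≤
      (∑ i, ENNReal.ofReal (w i) * ∫⁻ ω, ENNReal.ofReal (Z i ω) ∂μ) / ENNReal.ofReal c := by
  have hterm : ∀ i, AEMeasurable (fun ω ↦ ENNReal.ofReal (w i * Z i ω)) μ :=
    fun i ↦ ((hZm i).const_mul (w i)).ennreal_ofReal
  calc μ {ω | c < ∑ i, w i * Z i ω}
      ≤ μ {ω | ENNReal.ofReal c ≤ ∑ i, ENNReal.ofReal (w i * Z i ω)} := by
        refine measure_mono fun ω hω ↦ ?_
        rw [mem_ofPred_eq, ← ENNReal.ofReal_sum_of_nonneg fun i _ ↦ mul_nonneg (hw i) (hZ i ω)]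
        exact ENNReal.ofReal_le_ofReal hω.le
    _ ≤ (∫⁻ ω, ∑ i, ENNReal.ofReal (w i * Z i ω) ∂μ) / ENNReal.ofReal c :=
        meas_ge_le_lintegral_div (Finset.aemeasurable_fun_sum _ fun i _ ↦ hterm i)
          (ENNReal.ofReal_pos.2 hc).ne' ENNReal.ofReal_ne_top
    _ = _ := by
        rw [lintegral_finsetSum' _ fun i _ ↦ hterm i]
        simp_rw [ENNReal.ofReal_mul (hw _)]
        congr 1
        exact Finset.sum_congr rfl fun i _ ↦ lintegral_const_mul'' _ (hZm i).ennreal_ofReal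

lemma measure_lt_sum_mul_abs_le {ν : Measure ℝ} [NeZero ν] {Y : ι → Ω → ℝ}
    (hlaw : ∀ i, μ.map (Y i) = ν) {w : ι → ℝ} (hw : ∀ i, 0 ≤ w i) (hW : 0 < ∑ i, w i)
    {M t p m : ℝ} (hM : 0 ≤ M) (ht : 0 < t) (hp : 0 ≤ p) (hm : 0 ≤ m)
    (htail : ν {x | M < |x|} ≤ ENNReal.ofReal p)
    (hmean : ∫⁻ x, ENNReal.ofReal (min |x| M) ∂ν ≤ ENNReal.ofReal m) :
    μ {ω | (∑ i, w i) * t < ∑ i, w i * |Y i ω|} ≤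
      ENNReal.ofReal (Fintype.card ι * p + m / t) := by
  have hY : ∀ i, AEMeasurable (Y i) μ :=
    fun i ↦ .of_map_ne_zero (by rw [hlaw i]; exact NeZero.ne ν)
  have hg : Measurable fun x : ℝ ↦ min |x| M := by fun_prop
  have htail_i : ∀ i, μ {ω | M < |Y i ω|} ≤ ENNReal.ofReal p := fun i ↦ by
    have hs : MeasurableSet {x : ℝ | M < |x|} :=
      measurableSet_lt measurable_const continuous_abs.measurable
    rwa [← hlaw i, Measure.map_apply_of_aemeasurable (hY i) hs] at htail
  have hmean_i : ∀ i, ∫⁻ ω, ENNReal.ofReal (min |Y i ω| M) ∂μ ≤ ENNReal.ofReal m := fun i ↦ by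
    rwa [← hlaw i, lintegral_map' hg.ennreal_ofReal.aemeasurable (hY i)] at hmean
  calc μ {ω | (∑ i, w i) * t < ∑ i, w i * |Y i ω|}
      ≤ μ (⋃ i, {ω | M < |Y i ω|}) + μ {ω | (∑ i, w i) * t < ∑ i, w i * min |Y i ω| M} :=
        (measure_mono (setOf_lt_sum_mul_abs_subset w Y _ M)).trans (measure_union_le _ _)
    _ ≤ ∑ _i : ι, ENNReal.ofReal p +
          (∑ i, ENNReal.ofReal (w i) * ENNReal.ofReal m) / ENNReal.ofReal ((∑ i, w i) * t) := by
        gcongr with i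
        · exact (measure_iUnion_fintype_le μ _).trans (Finset.sum_le_sum fun i _ ↦ htail_i i)
        · refine (measure_lt_sum_mul_le hw (fun i ω ↦ le_min (abs_nonneg _) hM)
            (fun i ↦ (hg.comp_aemeasurable (hY i))) (by positivity)).trans ?_
          gcongr with i
          exact hmean_i i
    _ = ENNReal.ofReal (Fintype.card ι * p + m / t) := by
        simp_rw [← ENNReal.ofReal_mul (hw _), ← ENNReal.ofReal_sum_of_nonneg
          fun i _ ↦ mul_nonneg (hw i) hm, ← Finset.sum_mul]
        rw [← ENNReal.ofReal_div_of_pos (by positivity), mul_div_mul_left _ _ hW.ne',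
          Finset.sum_const, Finset.card_univ, nsmul_eq_mul, ← ENNReal.ofReal_natCast,
          ← ENNReal.ofReal_mul (by positivity), ← ENNReal.ofReal_add (by positivity)
          (by positivity)]

end Truncation

lemma Real.arctan_le_self {x : ℝ} (hx : 0 ≤ x) : arctan x ≤ x := by
  simpa using le_tan (arctan_nonneg.2 hx) (arctan_lt_pi_div_two x)

lemma integral_id_div_one_add_sq (a b : ℝ) :
    ∫ x in a..b, x / (1 + x ^ 2) = (log (1 + b ^ 2) - log (1 + a ^ 2)) / 2 := by
  have hcont : Continuous fun x : ℝ ↦ x / (1 + x ^ 2) :=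
    continuous_id.div (by fun_prop) fun x ↦ by positivity
  have hderiv (x : ℝ) : HasDerivAt (fun y ↦ log (1 + y ^ 2) / 2) (x / (1 + x ^ 2)) x := by
    refine ((((hasDerivAt_pow 2 x).const_add 1).log (by positivity)).div_const 2).congr_deriv ?_
    norm_num
    field_simp
  rw [intervalIntegral.integral_eq_sub_of_hasDerivAt (fun x _ ↦ hderiv x)
    (hcont.intervalIntegrable _ _), sub_div]

lemma integral_abs_div_one_add_sq {M : ℝ} (hM : 0 ≤ M) :
    ∫ x in -M..M, |x| / (1 + x ^ 2) = log (1 + M ^ 2) := by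
  have hcont : Continuous fun x : ℝ ↦ |x| / (1 + x ^ 2) :=
    continuous_abs.div (by fun_prop) fun x ↦ by positivity
  rw [← intervalIntegral.integral_add_adjacent_intervals (b := 0)
    (hcont.intervalIntegrable _ _) (hcont.intervalIntegrable _ _)]
  have hneg : ∫ x in -M..0, |x| / (1 + x ^ 2) = -∫ x in -M..0, x / (1 + x ^ 2) := by
    rw [← intervalIntegral.integral_neg]
    refine intervalIntegral.integral_congr fun x hx ↦ ?_
    rw [Set.uIcc_of_le (by linarith)] at hx
    simp only [abs_of_nonpos hx.2, neg_div]
  have hpos : ∫ x in (0 : ℝ)..M, |x| / (1 + x ^ 2) = ∫ x in (0 : ℝ)..M, x / (1 + x ^ 2) := by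
    refine intervalIntegral.integral_congr fun x hx ↦ ?_
    rw [Set.uIcc_of_le hM] at hx
    simp only [abs_of_nonneg hx.1]
  rw [hneg, hpos, integral_id_div_one_add_sq, integral_id_div_one_add_sq]
  simp only [zero_pow two_ne_zero, add_zero, log_one, even_two.neg_pow]
  ring

lemma stdCauchy_apply {s : Set ℝ} (hs : MeasurableSet s) :
    stdCauchy s = ENNReal.ofReal ((∫ x in s, (1 + x ^ 2)⁻¹) / π) := by
  have hdens (x : ℝ) : 1 / (π * (1 + x ^ 2)) = (1 + x ^ 2)⁻¹ / π := by
    field_simp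
  simp_rw [stdCauchy, withDensity_apply _ hs, ← integral_div, hdens]
  rw [← ofReal_integral_eq_lintegral_ofReal (integrable_inv_one_add_sq.div_const π).integrableOn
      (.of_forall fun x ↦ by positivity)]

instance : IsProbabilityMeasure stdCauchy :=
  ⟨by rw [stdCauchy_apply .univ, Measure.restrict_univ, integral_univ_inv_one_add_sq,
    div_self pi_ne_zero, ENNReal.ofReal_one]⟩

lemma stdCauchy_abs_gt_le {M : ℝ} (hM : 0 < M) :
    stdCauchy {x | M < |x|} ≤ ENNReal.ofReal (2 / (π * M)) := by
  have hsplit : {x : ℝ | M < |x|} ⊆ Iic (-M) ∪ Ioi M := fun x hx ↦ by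
    rcases lt_abs.1 (mem_ofPred.1 hx) with h | h
    · exact Or.inr h
    · exact Or.inl (show x ≤ -M by linarith)
  have hhalf : (π / 2 - arctan M) / π ≤ M⁻¹ / π := by
    rw [← arctan_inv_of_pos hM]
    exact div_le_div_of_nonneg_right (arctan_le_self (inv_nonneg.2 hM.le)) pi_pos.le
  calc stdCauchy {x | M < |x|}
      ≤ stdCauchy (Iic (-M)) + stdCauchy (Ioi M) :=
        (measure_mono hsplit).trans (measure_union_le _ _)
    _ = ENNReal.ofReal ((π / 2 - arctan M) / π) + ENNReal.ofReal ((π / 2 - arctan M) / π) := by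
        rw [stdCauchy_apply measurableSet_Iic, stdCauchy_apply measurableSet_Ioi,
          integral_Iic_inv_one_add_sq, integral_Ioi_inv_one_add_sq, arctan_neg]
        ring_nf
    _ ≤ ENNReal.ofReal (2 / (π * M)) := by
        have hnonneg : 0 ≤ (π / 2 - arctan M) / π :=
          div_nonneg (sub_nonneg.2 (arctan_lt_pi_div_two M).le) pi_pos.le
        rw [← ENNReal.ofReal_add hnonneg hnonneg]
        refine ENNReal.ofReal_le_ofReal ?_
        calc _ ≤ M⁻¹ / π + M⁻¹ / π := add_le_add hhalf hhalf
          _ = 2 / (π * M) := by field_simp; ring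

lemma lintegral_min_abs_stdCauchy_le {M : ℝ} (hM : 0 < M) :
    ∫⁻ x, ENNReal.ofReal (min |x| M) ∂stdCauchy ≤ ENNReal.ofReal ((2 + log (1 + M ^ 2)) / π) := by
  have hs : MeasurableSet {x : ℝ | M < |x|} :=
    measurableSet_lt measurable_const continuous_abs.measurable
  have hcompl : {x : ℝ | M < |x|}ᶜ = Icc (-M) M := by
    ext x
    simp only [mem_compl_iff, mem_ofPred_eq, not_lt, Set.mem_Icc, abs_le]
  have hout : ∫⁻ x in {x | M < |x|}, ENNReal.ofReal (min |x| M) ∂stdCauchy ≤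
      ENNReal.ofReal (2 / π) :=
    calc _ ≤ ∫⁻ _ in {x | M < |x|}, ENNReal.ofReal M ∂stdCauchy :=
          setLIntegral_mono' hs fun x _ ↦ ENNReal.ofReal_le_ofReal (min_le_right _ _)
      _ = ENNReal.ofReal M * stdCauchy {x | M < |x|} := setLIntegral_const _ _
      _ ≤ ENNReal.ofReal M * ENNReal.ofReal (2 / (π * M)) := by
          gcongr
          exact stdCauchy_abs_gt_le hM
      _ = ENNReal.ofReal (2 / π) := by
          rw [← ENNReal.ofReal_mul hM.le]
          congr 1
          field_simp
  have hcont : Continuous fun x : ℝ ↦ |x| / (1 + x ^ 2) / π :=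
    (continuous_abs.div (by fun_prop) fun x ↦ by positivity).div_const π
  have hin : ∫⁻ x in Icc (-M) M, ENNReal.ofReal (min |x| M) ∂stdCauchy ≤
      ENNReal.ofReal (log (1 + M ^ 2) / π) :=
    calc _ ≤ ∫⁻ x in Icc (-M) M, ENNReal.ofReal |x| ∂stdCauchy :=
          lintegral_mono fun x ↦ ENNReal.ofReal_le_ofReal (min_le_left _ _)
      _ = ENNReal.ofReal (∫ x in Icc (-M) M, |x| / (1 + x ^ 2) / π) := by
          rw [stdCauchy, setLIntegral_withDensity_eq_setLIntegral_mul _ (by fun_prop)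
            (by fun_prop) measurableSet_Icc, ofReal_integral_eq_lintegral_ofReal
            hcont.integrableOn_Icc (.of_forall fun x ↦ by positivity)]
          refine setLIntegral_congr_fun measurableSet_Icc fun x _ ↦ ?_
          rw [Pi.mul_apply, ← ENNReal.ofReal_mul (by positivity)]
          congr 1
          field_simp
      _ = ENNReal.ofReal (log (1 + M ^ 2) / π) := by
          rw [integral_div, integral_Icc_eq_integral_Ioc,
            ← intervalIntegral.integral_of_le (by linarith), integral_abs_div_one_add_sq hM.le]
  calc ∫⁻ x, ENNReal.ofReal (min |x| M) ∂stdCauchy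
      = (∫⁻ x in {x | M < |x|}, ENNReal.ofReal (min |x| M) ∂stdCauchy) +
          ∫⁻ x in {x | M < |x|}ᶜ, ENNReal.ofReal (min |x| M) ∂stdCauchy :=
        (lintegral_add_compl _ hs).symm
    _ ≤ ENNReal.ofReal (2 / π) + ENNReal.ofReal (log (1 + M ^ 2) / π) := by
        rw [hcompl]
        exact add_le_add hout hin
    _ = ENNReal.ofReal ((2 + log (1 + M ^ 2)) / π) := by
        rw [← ENNReal.ofReal_add (by positivity)
          (div_nonneg (log_nonneg (by nlinarith)) pi_pos.le), add_div]

lemma four_add_log_one_add_sq_le {M : ℝ} (hM : 3 ≤ M) :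
    4 + log (1 + M ^ 2) ≤ 2 * π * log M := by
  have hM0 : 0 < M := by linarith
  have hlogM : 1 ≤ log M := by
    rw [le_log_iff_exp_le hM0]
    linarith [exp_one_lt_d9]
  have hlog : log (1 + M ^ 2) ≤ 2 * log M + 1 / 9 :=
    calc log (1 + M ^ 2) ≤ log (10 / 9 * M ^ 2) := log_le_log (by positivity) (by nlinarith)
      _ = log (10 / 9) + 2 * log M := by
          rw [log_mul (by norm_num) (by positivity), log_pow, Nat.cast_ofNat]
      _ ≤ 2 * log M + 1 / 9 := by
          linarith [log_le_sub_one_of_pos (show (0 : ℝ) < 10 / 9 by norm_num)]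
  nlinarith [pi_gt_d2, mul_le_mul_of_nonneg_left hlogM (sub_nonneg.2 pi_gt_d2.le)]

theorem dependent_cauchy_upper_tail_general {Ω : Type*} {mΩ : MeasurableSpace Ω}
    (μ : Measure Ω)
    (n : ℕ) (hn : 3 ≤ n)
    (X : Fin n → Ω → ℝ) (hlaw : ∀ i, Measure.map (X i) μ = stdCauchy)
    (γ : Fin n → ℝ) (hγ : ∀ i, 0 < γ i)
    (t : ℝ) (ht : 1 ≤ t) :
    μ {ω | (∑ i, γ i) * t < ∑ i, γ i * |X i ω|} ≤
      ENNReal.ofReal (2 * Real.log (n * t) / t) := by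
  have hn' : (3 : ℝ) ≤ n := by exact_mod_cast hn
  have hM : 3 ≤ (n : ℝ) * t := by nlinarith
  have hW : 0 < ∑ i, γ i := Finset.sum_pos (fun i _ ↦ hγ i) ⟨⟨0, by omega⟩, mem_univ _⟩
  have hlog : 0 ≤ log (1 + (n * t) ^ 2) := log_nonneg (by nlinarith)
  refine (measure_lt_sum_mul_abs_le (M := n * t) hlaw (fun i ↦ (hγ i).le) hW (by positivity)
    (by positivity) (by positivity) (by positivity) (stdCauchy_abs_gt_le (by positivity))
    (lintegral_min_abs_stdCauchy_le (by positivity))).trans (ENNReal.ofReal_le_ofReal ?_)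
  rw [Fintype.card_fin]
  calc (n : ℝ) * (2 / (π * (n * t))) + (2 + log (1 + (n * t) ^ 2)) / π / t
      = (4 + log (1 + (n * t) ^ 2)) / (π * t) := by field_simp; ring
    _ ≤ 2 * π * log (n * t) / (π * t) := by gcongr; exact four_add_log_one_add_sq_le hM
    _ = 2 * log (n * t) / t := by field_simp

/-- Upper tail inequality for positive linear combinations of possibly dependent
standard Cauchy random variables: `Pr[∑ γ_i |X_i| > γ t] ≤ 2 log(n t) / t`. -/
theorem dependent_cauchy_upper_tail {Ω : Type*} {mΩ : MeasurableSpace Ω}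
    (μ : Measure Ω) [IsProbabilityMeasure μ]
    (n : ℕ) (hn : 3 ≤ n)
    (X : Fin n → Ω → ℝ) (hlaw : ∀ i, Measure.map (X i) μ = stdCauchy)
    (γ : Fin n → ℝ) (hγ : ∀ i, 0 < γ i)
    (t : ℝ) (ht : 1 ≤ t) :
    μ {ω | (∑ i, γ i) * t < ∑ i, γ i * |X i ω|} ≤
      ENNReal.ofReal (2 * Real.log (n * t) / t) :=
  dependent_cauchy_upper_tail_general (mΩ := mΩ) μ n hn X hlaw γ hγ t ht
end

section
/- Let Π ∈ R^{R×n} be a matrix with exactly s nonzero entries per column, each of absolute value s^{-1/2}, and suppose that for every row i the set B_i = {j ≤ m : Π_{i,j} ≠ 0} has size at most K. Then for any y ∈ R^n and any 1 ≤ p ≤ 2, ‖Π (y_{1:m})‖_p ≤ s^{1/p − 1/2} K^{1 − 1/p} ‖y_{1:m}‖_p, where y_{1:m} denotes y with all coordinates beyond index m set to zero. -/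
/-!
Row `i` of `P z` involves at most `K` nonzero entries, each of size at most `s^{-1/2}`, so the
power-mean inequality gives `|(P z)_i|^p ≤ s^{-p/2} K^{p-1} ∑_{P i j ≠ 0} |z_j|^p`. Summing over
`i` counts each column at most `s` times, hence `‖P z‖_p^p ≤ s^{1-p/2} K^{p-1} ‖z‖_p^p`.
-/

open Finset

/-- The entrywise `ℓ_p` norm on `Fin n → ℝ`. -/
noncomputable def pnorm {n : ℕ} (p : ℝ) (x : Fin n → ℝ) : ℝ :=
  (∑ i, |x i| ^ p) ^ (1 / p)

open Matrix

theorem pnorm_nonneg {n : ℕ} (p : ℝ) (x : Fin n → ℝ) : 0 ≤ pnorm p x := by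
  unfold pnorm
  positivity

section

variable {ι κ : Type*} [Fintype κ] (M : Matrix ι κ ℝ)

theorem abs_mulVec_apply_rpow_le (x : κ → ℝ) {a p : ℝ} {K : ℕ} (ha : 0 ≤ a)
    (hentry : ∀ i j, |M i j| ≤ a) (hp : 1 ≤ p) (i : ι)
    (hrow : #{j | M i j ≠ 0 ∧ x j ≠ 0} ≤ K) :
    |(M *ᵥ x) i| ^ p ≤ a ^ p * K ^ (p - 1) * ∑ j with M i j ≠ 0, |x j| ^ p := by
  set T : Finset κ := {j | M i j ≠ 0 ∧ x j ≠ 0}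
  have hsupp : (M *ᵥ x) i = ∑ j ∈ T, M i j * x j :=
    (sum_filter_of_ne fun j _ h => mul_ne_zero_iff.mp h).symm
  have habs : |(M *ᵥ x) i| ≤ a * ∑ j ∈ T, |x j| := by
    rw [hsupp, mul_sum]
    refine (abs_sum_le_sum_abs _ _).trans (sum_le_sum fun j _ => ?_)
    rw [abs_mul]
    exact mul_le_mul_of_nonneg_right (hentry i j) (abs_nonneg _)
  calc |(M *ᵥ x) i| ^ p ≤ (a * ∑ j ∈ T, |x j|) ^ p := by gcongr
    _ = a ^ p * (∑ j ∈ T, |x j|) ^ p := Real.mul_rpow ha (by positivity)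
    _ ≤ a ^ p * ((#T : ℝ) ^ (p - 1) * ∑ j ∈ T, |x j| ^ p) := by
      gcongr
      exact Real.rpow_sum_le_const_mul_sum_rpow T x hp
    _ ≤ a ^ p * (K ^ (p - 1) * ∑ j with M i j ≠ 0, |x j| ^ p) := by
      gcongr
      exact monotone_filter_right _ fun _ _ h => h.1
    _ = a ^ p * K ^ (p - 1) * ∑ j with M i j ≠ 0, |x j| ^ p := by ring

variable [Fintype ι]

theorem sum_sum_filter_ne_zero_le {s : ℕ} (hcol : ∀ j, #{i | M i j ≠ 0} ≤ s) {f : κ → ℝ}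
    (hf : ∀ j, 0 ≤ f j) :
    ∑ i, ∑ j with M i j ≠ 0, f j ≤ s * ∑ j, f j := by
  simp_rw [sum_filter]
  rw [sum_comm, mul_sum]
  gcongr with j
  rw [← sum_filter, sum_const, nsmul_eq_mul]
  exact mul_le_mul_of_nonneg_right (by exact_mod_cast hcol j) (hf j)

theorem sum_abs_mulVec_rpow_le (x : κ → ℝ) {a p : ℝ} {s K : ℕ} (ha : 0 ≤ a)
    (hentry : ∀ i j, |M i j| ≤ a) (hcol : ∀ j, #{i | M i j ≠ 0} ≤ s)
    (hrow : ∀ i, #{j | M i j ≠ 0 ∧ x j ≠ 0} ≤ K) (hp : 1 ≤ p) :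
    ∑ i, |(M *ᵥ x) i| ^ p ≤ a ^ p * K ^ (p - 1) * s * ∑ j, |x j| ^ p := by
  calc ∑ i, |(M *ᵥ x) i| ^ p
      ≤ ∑ i, a ^ p * K ^ (p - 1) * ∑ j with M i j ≠ 0, |x j| ^ p :=
        sum_le_sum fun i _ => abs_mulVec_apply_rpow_le M x ha hentry hp i (hrow i)
    _ = a ^ p * K ^ (p - 1) * ∑ i, ∑ j with M i j ≠ 0, |x j| ^ p := by rw [mul_sum]
    _ ≤ a ^ p * K ^ (p - 1) * (s * ∑ j, |x j| ^ p) := by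
        gcongr
        exact sum_sum_filter_ne_zero_le M hcol fun j => by positivity
    _ = a ^ p * K ^ (p - 1) * s * ∑ j, |x j| ^ p := by ring

end

theorem pnorm_mulVec_le {R n : ℕ} (M : Matrix (Fin R) (Fin n) ℝ) (x : Fin n → ℝ) {a p : ℝ}
    {s K : ℕ} (ha : 0 ≤ a) (hentry : ∀ i j, |M i j| ≤ a) (hcol : ∀ j, #{i | M i j ≠ 0} ≤ s)
    (hrow : ∀ i, #{j | M i j ≠ 0 ∧ x j ≠ 0} ≤ K) (hp : 1 ≤ p) :
    pnorm p (M *ᵥ x) ≤ a * (s : ℝ) ^ (1 / p) * (K : ℝ) ^ (1 - 1 / p) * pnorm p x := by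
  have hp0 : p ≠ 0 := by positivity
  have hcoef : (a ^ p * K ^ (p - 1) * s) ^ (1 / p) =
      a * (s : ℝ) ^ (1 / p) * (K : ℝ) ^ (1 - 1 / p) := by
    rw [Real.mul_rpow (by positivity) (by positivity), Real.mul_rpow (by positivity) (by positivity),
      one_div, Real.rpow_rpow_inv ha hp0, ← Real.rpow_mul (by positivity)]
    field_simp
  unfold pnorm
  rw [← hcoef, ← Real.mul_rpow (by positivity) (by positivity)]
  gcongr
  exact sum_abs_mulVec_rpow_le M x ha hentry hcol hrow hp

theorem sparse_embedding_pnorm_bound_general (n R s K m : ℕ)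
    (P : Matrix (Fin R) (Fin n) ℝ)
    (hcol : ∀ j, (Finset.univ.filter fun i => P i j ≠ 0).card = s)
    (hval : ∀ i j, P i j ≠ 0 → |P i j| = (s : ℝ) ^ (-(1 / 2) : ℝ))
    (hrow : ∀ i, (Finset.univ.filter fun j : Fin n => (j : ℕ) < m ∧ P i j ≠ 0).card ≤ K)
    (p : ℝ) (hp : 1 ≤ p) (y : Fin n → ℝ) :
    pnorm p (P.mulVec fun j => if (j : ℕ) < m then y j else 0) ≤
      (s : ℝ) ^ (1 / p - 1 / 2) * (K : ℝ) ^ (1 - 1 / p) *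
        pnorm p (fun j : Fin n => if (j : ℕ) < m then y j else 0) := by
  set z : Fin n → ℝ := fun j => if (j : ℕ) < m then y j else 0
  have hentry : ∀ i j, |P i j| ≤ (s : ℝ) ^ (-(1 / 2) : ℝ) := fun i j => by
    by_cases h : P i j = 0
    · rw [h, abs_zero]
      positivity
    · exact (hval i j h).le
  have hrow' : ∀ i, #{j | P i j ≠ 0 ∧ z j ≠ 0} ≤ K := fun i => by
    refine (card_le_card (monotone_filter_right _ fun j _ h => ⟨?_, h.1⟩)).trans (hrow i)
    by_contra hm
    exact h.2 (if_neg hm)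
  -- not an equality: at `s = 0`, `p = 2` the left side is `0` and the right side `0 ^ 0 = 1`
  have hexp : (s : ℝ) ^ (-(1 / 2) : ℝ) * (s : ℝ) ^ (1 / p) ≤ (s : ℝ) ^ (1 / p - 1 / 2) := by
    rw [sub_eq_neg_add]
    exact Real.le_rpow_add (by positivity) _ _
  calc pnorm p (P *ᵥ z)
      ≤ (s : ℝ) ^ (-(1 / 2) : ℝ) * (s : ℝ) ^ (1 / p) * (K : ℝ) ^ (1 - 1 / p) * pnorm p z :=
        pnorm_mulVec_le P z (by positivity) hentry (fun j => (hcol j).le) hrow' hp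
    _ ≤ (s : ℝ) ^ (1 / p - 1 / 2) * (K : ℝ) ^ (1 - 1 / p) * pnorm p z := by
        gcongr
        exact pnorm_nonneg p z

/-- If `P` has exactly `s` nonzero entries per column, each of absolute value
`s^{-1/2}`, and each row meets at most `K` of the first `m` columns in a nonzero
entry, then `‖P (y_{1:m})‖_p ≤ s^{1/p - 1/2} K^{1 - 1/p} ‖y_{1:m}‖_p`. -/
theorem sparse_embedding_pnorm_bound (n R s K m : ℕ)
    (P : Matrix (Fin R) (Fin n) ℝ)
    (hcol : ∀ j, (Finset.univ.filter fun i => P i j ≠ 0).card = s)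
    (hval : ∀ i j, P i j ≠ 0 → |P i j| = (s : ℝ) ^ (-(1 / 2) : ℝ))
    (hrow : ∀ i, (Finset.univ.filter fun j : Fin n => (j : ℕ) < m ∧ P i j ≠ 0).card ≤ K)
    (p : ℝ) (hp : 1 ≤ p) (hp2 : p ≤ 2) (y : Fin n → ℝ) :
    pnorm p (P.mulVec fun j => if (j : ℕ) < m then y j else 0) ≤
      (s : ℝ) ^ (1 / p - 1 / 2) * (K : ℝ) ^ (1 - 1 / p) *
        pnorm p (fun j : Fin n => if (j : ℕ) < m then y j else 0) :=
  sparse_embedding_pnorm_bound_general n R s K m P hcol hval hrow p hp y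
end
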